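/- (Theorem 2.1, fourth identity, q-case: joint q-factorial moments.) Let n ∈ ℕ, α₁, α₂ ∈ (0,1), and let m₁, m₂ be natural numbers with m₂ ≤ n and m₁ ≤ n − m₂. Then ∑_{y₁=0}^{n} ∑_{y₂=0}^{n−y₁} [y₁]_{m₁,q} · [y₂]_{m₂,q} · f(y₁,y₂) = [n]_{m₁+m₂,q} · α₁^{m₁} · α₂^{m₂} · q^{b(m₁)+b(m₂)} / ( ⟨1⊕α₁⟩_{m₁} · ⟨1⊕α₂⟩_{m₂} · ∏_{i=1}^{m₂} (1 + α₁·q^{n−m₂+i−1}) ). -/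

import Mathlib

open Finset

/-- q-integer `[k]_q = (1 - q^k)/(1 - q)`. -/
noncomputable def qInt (q : ℝ) (k : ℤ) : ℝ := (1 - q ^ k) / (1 - q)

/-- q-factorial `[n]_q! = ∏_{i=1}^n [i]_q`. -/
noncomputable def qFact (q : ℝ) (n : ℕ) : ℝ := ∏ i ∈ Finset.Icc 1 n, qInt q (i : ℤ)

/-- q-binomial coefficient `C_q(n,k)`. -/
noncomputable def qBinom (q : ℝ) (n k : ℕ) : ℝ := qFact q n / (qFact q k * qFact q (n - k))

/-- q-falling factorial `[u]_{m,q} = ∏_{i=1}^m [u-i+1]_q`. -/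
noncomputable def qFall (q : ℝ) (u : ℤ) (m : ℕ) : ℝ := ∏ i ∈ Finset.Icc 1 m, qInt q (u - (i : ℤ) + 1)

/-- `[k]_{q⁻¹} = q^{1-k} · [k]_q`. -/
noncomputable def qIntInv (q : ℝ) (k : ℤ) : ℝ := q ^ (1 - k) * qInt q k

/-- `[u]_{m,q⁻¹} = ∏_{i=1}^m [u-i+1]_{q⁻¹}`. -/
noncomputable def qFallInv (q : ℝ) (u : ℤ) (m : ℕ) : ℝ := ∏ i ∈ Finset.Icc 1 m, qIntInv q (u - (i : ℤ) + 1)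

/-- `b(k) = k(k-1)/2`. -/
def bb (k : ℕ) : ℕ := k * (k - 1) / 2

/-- `⟨1 ⊕ α⟩_m = ∏_{i=1}^m (1 + α q^{i-1})`. -/
noncomputable def oplus (q α : ℝ) (m : ℕ) : ℝ := ∏ i ∈ Finset.Icc 1 m, (1 + α * q ^ (i - 1))

/-- `⟨1 ⊖ β⟩_m = ∏_{i=1}^m (1 - β q^{i-1})`. -/
noncomputable def ominus (q β : ℝ) (m : ℕ) : ℝ := ∏ i ∈ Finset.Icc 1 m, (1 - β * q ^ (i - 1))

/-- q-trinomial coefficient `T_q(n; x₁, x₂)`. -/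
noncomputable def qTri (q : ℝ) (n x1 x2 : ℕ) : ℝ :=
  qFact q n / (qFact q x1 * qFact q x2 * qFact q (n - x1 - x2))

/-- pmf of the q-trinomial distribution of the first kind. -/
noncomputable def fpmf (q a1 a2 : ℝ) (n y1 y2 : ℕ) : ℝ :=
  qTri q n y1 y2 * a1 ^ y1 * a2 ^ y2 * q ^ (bb y1 + bb y2) /
    (oplus q a1 n * oplus q a2 (n - y1))

/-!
The pmf factors as a q-binomial pmf in `y₁` (with `n` trials) times a q-binomial pmf in `y₂`
(with `n - y₁` trials). A q-binomial factorial moment is computed by absorption,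
`[y]_m C_q(N, y) = [N]_m C_q(N - m, y - m)`, which turns the moment sum into the total mass of a
q-binomial distribution with parameter `α q^m`, equal to `1` by the q-binomial theorem. Summing
over `y₂` first leaves `[n - y₁]_{m₂}` against the pmf in `y₁`; absorbing it the same way leaves
an `m₁`-th moment with `n - m₂` trials, and `⟨1⊕α₁⟩_n / ⟨1⊕α₁⟩_{n-m₂}` is the last product.
-/

section QCalculus

variable {q : ℝ}

theorem qInt_natCast (hq1 : q ≠ 1) (k : ℕ) : qInt q k = ∑ i ∈ range k, q ^ i := by
  rw [geom_sum_eq hq1, qInt, zpow_natCast, ← neg_div_neg_eq, neg_sub, neg_sub]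

theorem qInt_natCast_pos (hq0 : 0 < q) (hq1 : q ≠ 1) {k : ℕ} (hk : 0 < k) :
    0 < qInt q k := by
  rw [qInt_natCast hq1]
  exact sum_pos (fun i _ => pow_pos hq0 i) (nonempty_range_iff.2 hk.ne')

theorem qInt_natCast_add (hq1 : q ≠ 1) (a b : ℕ) :
    qInt q ((a + b : ℕ) : ℤ) = qInt q a + q ^ a * qInt q b := by
  simp only [qInt_natCast hq1, sum_range_add, mul_sum, pow_add]

theorem qFact_zero : qFact q 0 = 1 := by
  simp [qFact]

theorem qFact_succ (n : ℕ) : qFact q (n + 1) = qFact q n * qInt q ((n + 1 : ℕ) : ℤ) := by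
  rw [qFact, qFact, prod_Icc_succ_top (by omega)]

theorem qFact_pos (hq0 : 0 < q) (hq1 : q ≠ 1) (n : ℕ) : 0 < qFact q n := by
  induction n with
  | zero => simp [qFact_zero]
  | succ n ih => rw [qFact_succ]; exact mul_pos ih (qInt_natCast_pos hq0 hq1 n.succ_pos)

theorem qBinom_zero_right (hq0 : 0 < q) (hq1 : q ≠ 1) (n : ℕ) : qBinom q n 0 = 1 := by
  simp [qBinom, qFact_zero, (qFact_pos hq0 hq1 n).ne']

theorem qBinom_self (hq0 : 0 < q) (hq1 : q ≠ 1) (n : ℕ) : qBinom q n n = 1 := by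
  simp [qBinom, qFact_zero, (qFact_pos hq0 hq1 n).ne']

-- `qBinom q n (n + 1)` is not `0` (truncated subtraction), hence `j < n`.
theorem qBinom_succ_succ (hq0 : 0 < q) (hq1 : q ≠ 1) {n j : ℕ} (hj : j < n) :
    qBinom q (n + 1) (j + 1) = q ^ (j + 1) * qBinom q n (j + 1) + qBinom q n j := by
  obtain ⟨k, rfl⟩ := Nat.exists_eq_add_of_lt hj
  have hsplit : qInt q ((j + k + 1 + 1 : ℕ) : ℤ) =
      qInt q ((j + 1 : ℕ) : ℤ) + q ^ (j + 1) * qInt q ((k + 1 : ℕ) : ℤ) := by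
    rw [← qInt_natCast_add hq1, show j + 1 + (k + 1) = j + k + 1 + 1 by omega]
  have hn : j + k + 1 - j = k + 1 := by omega
  have hn' : j + k + 1 - (j + 1) = k := by omega
  have hn'' : j + k + 1 + 1 - (j + 1) = k + 1 := by omega
  simp only [qBinom, hn, hn', hn'', qFact_succ, hsplit]
  have := (qFact_pos hq0 hq1 j).ne'
  have := (qFact_pos hq0 hq1 k).ne'
  have : qInt q ((j + 1 : ℕ) : ℤ) ≠ 0 := (qInt_natCast_pos hq0 hq1 j.succ_pos).ne'
  have : qInt q ((k + 1 : ℕ) : ℤ) ≠ 0 := (qInt_natCast_pos hq0 hq1 k.succ_pos).ne'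
  field_simp
  ring

end QCalculus

theorem bb_succ (k : ℕ) : bb (k + 1) = bb k + k := by
  simp only [bb, ← Nat.choose_two_right, Nat.choose_succ_succ', Nat.choose_one_right]
  ring

theorem bb_add (a b : ℕ) : bb (a + b) = bb a + bb b + a * b := by
  induction b with
  | zero => simp [bb]
  | succ b ih => rw [← add_assoc, bb_succ, ih, bb_succ]; ring

section QPochhammer

variable {q : ℝ}

theorem oplus_eq_prod_range (α : ℝ) (m : ℕ) : oplus q α m = ∏ i ∈ range m, (1 + α * q ^ i) := by
  rw [oplus, ← Nat.Ico_zero_eq_range, ← prod_Ico_add_right_sub_eq (c := 1)]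
  rfl

theorem oplus_add (α : ℝ) (a b : ℕ) : oplus q α (a + b) = oplus q α a * oplus q (α * q ^ a) b := by
  simp only [oplus_eq_prod_range, prod_range_add, pow_add, mul_assoc]

theorem oplus_pos (hq : 0 ≤ q) {α : ℝ} (hα : 0 ≤ α) (m : ℕ) : 0 < oplus q α m := by
  rw [oplus_eq_prod_range]
  exact prod_pos fun i _ => by positivity

end QPochhammer

section QBinomial

variable {q : ℝ}

theorem sum_range_qBinom_succ_mul (hq0 : 0 < q) (hq1 : q ≠ 1) (f : ℕ → ℝ) (N : ℕ) :
    ∑ y ∈ range (N + 2), qBinom q (N + 1) y * f y =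
      ∑ y ∈ range (N + 1), q ^ y * qBinom q N y * f y +
        ∑ y ∈ range (N + 1), qBinom q N y * f (y + 1) := by
  calc ∑ y ∈ range (N + 2), qBinom q (N + 1) y * f y
      = ∑ y ∈ range N, qBinom q (N + 1) (y + 1) * f (y + 1) + f (N + 1) + f 0 := by
        rw [sum_range_succ', sum_range_succ, qBinom_self hq0 hq1, qBinom_zero_right hq0 hq1]
        ring
    _ = ∑ y ∈ range N, (q ^ (y + 1) * qBinom q N (y + 1) * f (y + 1) +
          qBinom q N y * f (y + 1)) + f (N + 1) + f 0 := by
        congr 2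
        refine sum_congr rfl fun y hy => ?_
        rw [qBinom_succ_succ hq0 hq1 (mem_range.1 hy)]
        ring
    _ = _ := by
        rw [sum_add_distrib, sum_range_succ' (fun y => q ^ y * qBinom q N y * f y),
          sum_range_succ (fun y => qBinom q N y * f (y + 1)), qBinom_self hq0 hq1,
          qBinom_zero_right hq0 hq1]
        ring

/-- The q-binomial theorem (Rothe). -/
theorem sum_qBinom_mul_pow_mul_pow_bb (hq0 : 0 < q) (hq1 : q ≠ 1) (N : ℕ) (α : ℝ) :
    ∑ y ∈ range (N + 1), qBinom q N y * α ^ y * q ^ bb y = oplus q α N := by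
  induction N generalizing α with
  | zero => simp [qBinom_zero_right hq0 hq1, bb, oplus]
  | succ N ih =>
    have hstep : ∀ y, α ^ (y + 1) * q ^ bb (y + 1) = α * ((α * q) ^ y * q ^ bb y) := by
      intro y; rw [bb_succ]; ring
    simp only [mul_assoc, sum_range_qBinom_succ_mul hq0 hq1, hstep]
    rw [add_comm N 1, oplus_add, ← ih, show oplus q α 1 = 1 + α by simp [oplus], add_mul,
      one_mul, mul_sum]
    congr 1 <;> exact sum_congr (by rw [add_comm]) fun y _ => by ring

end QBinomial

section QFalling

variable {q : ℝ}

theorem qFall_zero (u : ℤ) : qFall q u 0 = 1 := by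
  simp [qFall]

theorem qFall_succ (u : ℤ) (m : ℕ) :
    qFall q u (m + 1) = qFall q u m * qInt q (u - ((m + 1 : ℕ) : ℤ) + 1) := by
  rw [qFall, qFall, prod_Icc_succ_top (by omega)]

theorem qFall_add (u : ℤ) (a b : ℕ) : qFall q u (a + b) = qFall q u a * qFall q (u - a) b := by
  induction b with
  | zero => simp [qFall_zero]
  | succ b ih =>
    rw [← add_assoc, qFall_succ, ih, qFall_succ, mul_assoc]
    congr 3
    push_cast
    ring

theorem qFall_natCast_of_lt {y m : ℕ} (h : y < m) : qFall q y m = 0 := by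
  refine prod_eq_zero (i := y + 1) (mem_Icc.2 ⟨by omega, h⟩) ?_
  simp [qInt]

theorem qFact_eq_qFall_mul {y m : ℕ} (h : m ≤ y) : qFact q y = qFall q y m * qFact q (y - m) := by
  induction m with
  | zero => simp [qFall_zero]
  | succ m ih =>
    have hy : y - m = y - (m + 1) + 1 := by omega
    rw [ih (by omega), hy, qFact_succ, qFall_succ, mul_assoc, mul_comm (qFact q _)]
    congr 4
    omega

theorem qFall_natCast (hq0 : 0 < q) (hq1 : q ≠ 1) {y m : ℕ} (h : m ≤ y) :
    qFall q y m = qFact q y / qFact q (y - m) :=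
  (eq_div_iff (qFact_pos hq0 hq1 _).ne').2 (qFact_eq_qFall_mul h).symm

theorem qFall_mul_qBinom (hq0 : 0 < q) (hq1 : q ≠ 1) {m y N : ℕ} (hmy : m ≤ y) (hyN : y ≤ N) :
    qFall q y m * qBinom q N y = qFall q N m * qBinom q (N - m) (y - m) := by
  rw [qFall_natCast hq0 hq1 hmy, qFall_natCast hq0 hq1 (hmy.trans hyN), qBinom, qBinom,
    show N - m - (y - m) = N - y by omega]
  have := (qFact_pos hq0 hq1 (y - m)).ne'
  have := (qFact_pos hq0 hq1 (N - m)).ne'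
  have := (qFact_pos hq0 hq1 (N - y)).ne'
  have := (qFact_pos hq0 hq1 y).ne'
  field_simp

theorem qFall_sub_mul_qBinom (hq0 : 0 < q) (hq1 : q ≠ 1) {m y N : ℕ} (h : y + m ≤ N) :
    qFall q ((N - y : ℕ) : ℤ) m * qBinom q N y = qFall q N m * qBinom q (N - m) y := by
  rw [qFall_natCast hq0 hq1 (by omega : m ≤ N - y), qFall_natCast hq0 hq1 (by omega : m ≤ N),
    qBinom, qBinom, show N - y - m = N - m - y by omega]
  have := (qFact_pos hq0 hq1 y).ne'
  have := (qFact_pos hq0 hq1 (N - m)).ne'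
  have := (qFact_pos hq0 hq1 (N - m - y)).ne'
  have := (qFact_pos hq0 hq1 (N - y)).ne'
  field_simp

end QFalling

/-- The q-binomial distribution of the first kind. -/
noncomputable def qBinomPmf (q α : ℝ) (N y : ℕ) : ℝ :=
  qBinom q N y * α ^ y * q ^ bb y / oplus q α N

section QBinomialDistribution

variable {q α : ℝ}

theorem sum_qBinomPmf (hq0 : 0 < q) (hq1 : q ≠ 1) (hα : 0 ≤ α) (N : ℕ) :
    ∑ y ∈ range (N + 1), qBinomPmf q α N y = 1 := by
  simp only [qBinomPmf]
  rw [← sum_div, sum_qBinom_mul_pow_mul_pow_bb hq0 hq1,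
    div_self (oplus_pos hq0.le hα N).ne']

theorem fpmf_eq_mul_qBinomPmf (hq0 : 0 < q) (hq1 : q ≠ 1) (α₁ α₂ : ℝ) (n y₁ y₂ : ℕ) :
    fpmf q α₁ α₂ n y₁ y₂ = qBinomPmf q α₁ n y₁ * qBinomPmf q α₂ (n - y₁) y₂ := by
  have hTri : qTri q n y₁ y₂ = qBinom q n y₁ * qBinom q (n - y₁) y₂ := by
    rw [qTri, qBinom, qBinom]
    have := (qFact_pos hq0 hq1 y₁).ne'
    have := (qFact_pos hq0 hq1 y₂).ne'
    have := (qFact_pos hq0 hq1 (n - y₁)).ne'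
    field_simp
  rw [fpmf, qBinomPmf, qBinomPmf, hTri, pow_add]
  ring

theorem qFall_mul_qBinomPmf (hq0 : 0 < q) (hq1 : q ≠ 1) {m y N : ℕ} (hmy : m ≤ y)
    (hyN : y ≤ N) :
    qFall q y m * qBinomPmf q α N y =
      qFall q N m * α ^ m * q ^ bb m / oplus q α m * qBinomPmf q (α * q ^ m) (N - m) (y - m) := by
  have hshift := qFall_mul_qBinom hq0 hq1 hmy hyN
  obtain ⟨z, rfl⟩ := Nat.exists_eq_add_of_le hmy
  obtain ⟨r, rfl⟩ := Nat.exists_eq_add_of_le hyN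
  simp only [Nat.add_sub_cancel_left, add_assoc] at hshift ⊢
  calc qFall q (m + z : ℕ) m * qBinomPmf q α (m + (z + r)) (m + z)
      = qFall q (m + z : ℕ) m * qBinom q (m + (z + r)) (m + z) * α ^ (m + z) * q ^ bb (m + z) /
          (oplus q α m * oplus q (α * q ^ m) (z + r)) := by
        rw [qBinomPmf, oplus_add]; ring
    _ = _ := by
        rw [hshift, qBinomPmf, bb_add, pow_add, pow_add, pow_add, mul_pow, ← pow_mul]
        ring

theorem qFall_sub_mul_qBinomPmf (hq0 : 0 < q) (hq1 : q ≠ 1) {b y N : ℕ} (h : y + b ≤ N) :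
    qFall q ((N - y : ℕ) : ℤ) b * qBinomPmf q α N y =
      qFall q N b / oplus q (α * q ^ (N - b)) b * qBinomPmf q α (N - b) y := by
  have hN : N = N - b + b := by omega
  rw [qBinomPmf, qBinomPmf, ← mul_div_assoc, ← mul_assoc, ← mul_assoc,
    qFall_sub_mul_qBinom hq0 hq1 h, hN, oplus_add, ← hN]
  ring

theorem sum_qFall_mul_qBinomPmf (hq0 : 0 < q) (hq1 : q ≠ 1) (hα : 0 ≤ α) (N m : ℕ) :
    ∑ y ∈ range (N + 1), qFall q y m * qBinomPmf q α N y =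
      qFall q N m * α ^ m * q ^ bb m / oplus q α m := by
  rcases le_or_gt m N with h | h
  · obtain ⟨r, rfl⟩ := Nat.exists_eq_add_of_le h
    have hα' : 0 ≤ α * q ^ m := by positivity
    rw [add_assoc, sum_range_add, sum_eq_zero fun y hy => by
        rw [qFall_natCast_of_lt (mem_range.1 hy), zero_mul], zero_add,
      sum_congr rfl fun z hz => qFall_mul_qBinomPmf hq0 hq1 (Nat.le_add_right m z)
        (by have := mem_range.1 hz; omega), ← mul_sum]
    simp only [Nat.add_sub_cancel_left, sum_qBinomPmf hq0 hq1 hα', mul_one]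
  · rw [sum_eq_zero fun y hy => by
        rw [qFall_natCast_of_lt (by have := mem_range.1 hy; omega), zero_mul],
      qFall_natCast_of_lt h]
    ring

theorem sum_qFall_mul_qFall_sub_mul_qBinomPmf (hq0 : 0 < q) (hq1 : q ≠ 1) (hα : 0 ≤ α)
    (N a b : ℕ) :
    ∑ y ∈ range (N + 1), qFall q y a * qFall q ((N - y : ℕ) : ℤ) b * qBinomPmf q α N y =
      qFall q N (a + b) * α ^ a * q ^ bb a / (oplus q α a * oplus q (α * q ^ (N - b)) b) := by
  rcases le_or_gt b N with h | h
  · obtain ⟨M, rfl⟩ := Nat.exists_eq_add_of_le' h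
    rw [show M + b + 1 = M + 1 + b by ring, sum_range_add, add_comm a b, qFall_add,
      sum_eq_zero (s := range b) fun y hy => by
        rw [qFall_natCast_of_lt (by have := mem_range.1 hy; omega : M + b - (M + 1 + y) < b),
          mul_zero, zero_mul], add_zero,
      sum_congr rfl fun y hy => by
        rw [mul_assoc, qFall_sub_mul_qBinomPmf hq0 hq1 (by have := mem_range.1 hy; omega),
          mul_left_comm], ← mul_sum, Nat.add_sub_cancel, sum_qFall_mul_qBinomPmf hq0 hq1 hα,
      Nat.cast_add, add_sub_cancel_right]
    ring
  · rw [sum_eq_zero fun y hy => by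
        rw [qFall_natCast_of_lt (by omega : N - y < b), mul_zero, zero_mul],
      qFall_natCast_of_lt (by omega : N < a + b)]
    ring

end QBinomialDistribution

theorem oplus_mul_pow_eq_prod_Icc (q α : ℝ) (c m : ℕ) :
    oplus q (α * q ^ c) m = ∏ i ∈ Icc 1 m, (1 + α * q ^ (c + i - 1)) := by
  refine prod_congr rfl fun i hi => ?_
  rw [show c + i - 1 = c + (i - 1) by have := (mem_Icc.1 hi).1; omega, pow_add, mul_assoc]

theorem stmt3_general (q : ℝ) (hq0 : 0 < q) (hq1 : q < 1) (n : ℕ) (α1 α2 : ℝ)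
    (hα1 : 0 < α1) (hα2 : 0 < α2)
    (m1 m2 : ℕ) :
    ∑ y1 ∈ Finset.range (n + 1), ∑ y2 ∈ Finset.range (n - y1 + 1),
      qFall q (y1 : ℤ) m1 * qFall q (y2 : ℤ) m2 * fpmf q α1 α2 n y1 y2
      = qFall q (n : ℤ) (m1 + m2) * α1 ^ m1 * α2 ^ m2 * q ^ (bb m1 + bb m2) /
        (oplus q α1 m1 * oplus q α2 m2 *
          ∏ i ∈ Finset.Icc 1 m2, (1 + α1 * q ^ (n - m2 + i - 1))) := by
  have hq1' : q ≠ 1 := hq1.ne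
  have hinner : ∀ y1 ∈ range (n + 1),
      ∑ y2 ∈ range (n - y1 + 1), qFall q (y1 : ℤ) m1 * qFall q (y2 : ℤ) m2 * fpmf q α1 α2 n y1 y2
        = qFall q (y1 : ℤ) m1 * qFall q ((n - y1 : ℕ) : ℤ) m2 * qBinomPmf q α1 n y1 *
          (α2 ^ m2 * q ^ bb m2 / oplus q α2 m2) := by
    intro y1 _
    calc _ = qFall q (y1 : ℤ) m1 * qBinomPmf q α1 n y1 *
          ∑ y2 ∈ range (n - y1 + 1), qFall q (y2 : ℤ) m2 * qBinomPmf q α2 (n - y1) y2 := by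
          rw [mul_sum]
          exact sum_congr rfl fun y2 _ => by rw [fpmf_eq_mul_qBinomPmf hq0 hq1']; ring
      _ = _ := by rw [sum_qFall_mul_qBinomPmf hq0 hq1' hα2.le]; ring
  rw [sum_congr rfl hinner, ← sum_mul, sum_qFall_mul_qFall_sub_mul_qBinomPmf hq0 hq1' hα1.le,
    oplus_mul_pow_eq_prod_Icc, pow_add]
  ring

theorem stmt3 (q : ℝ) (hq0 : 0 < q) (hq1 : q < 1) (n : ℕ) (α1 α2 : ℝ)
    (hα1 : 0 < α1) (hα1' : α1 < 1) (hα2 : 0 < α2) (hα2' : α2 < 1)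
    (m1 m2 : ℕ) (hm2 : m2 ≤ n) (hm1 : m1 ≤ n - m2) :
    ∑ y1 ∈ Finset.range (n + 1), ∑ y2 ∈ Finset.range (n - y1 + 1),
      qFall q (y1 : ℤ) m1 * qFall q (y2 : ℤ) m2 * fpmf q α1 α2 n y1 y2
      = qFall q (n : ℤ) (m1 + m2) * α1 ^ m1 * α2 ^ m2 * q ^ (bb m1 + bb m2) /
        (oplus q α1 m1 * oplus q α2 m2 *
          ∏ i ∈ Finset.Icc 1 m2, (1 + α1 * q ^ (n - m2 + i - 1))) :=
  stmt3_general q hq0 hq1 n α1 α2 hα1 hα2 m1 m2
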